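/- For every ε > 0 and every integer r ≥ 2 there exists β > 0 with the following property. Let E be a real inner product space and σ : [−1,1] → E a C^r curve that is bounded but not strongly ε-bounded. Then there exist −1 < t₁ < 0 < t₂ < 1 such that: (i) for every t ∈ [t₁, t₂] there exists a map φ_t from {v ∈ ℝ·σ′(t) : ‖v‖ ≤ β} to the orthogonal complement of ℝ·σ′(t) with φ_t(0) = 0 and ‖φ_t(v) − φ_t(w)‖ ≤ (1/3)‖v − w‖ for all v, w in its domain, such that the translated graph σ(t) + {v + φ_t(v) : v ∈ ℝ·σ′(t), ‖v‖ ≤ β} is contained in σ([−1,1]), and moreover every s ∈ [−1,1] with σ(s) in this graph satisfies ∠(σ′(s), σ′(t)) ≤ ‖σ(s) − σ(t)‖/β; (ii) the increasing affine bijections θ⁻ : [−1,1] → [−1, t₁] and θ⁺ : [−1,1] → [t₂, 1] make σ∘θ⁻ and σ∘θ⁺ strongly ε-bounded. -/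

import Mathlib

open Set

universe u

/-- `D` is a family of successive derivatives (up to order `r`) of the curve `D 0` on
`[−1,1]`: `D (k+1)` is the derivative of `D k` within `[−1,1]`, for every `k < r`. -/
def DerivFamilyOn {E : Type*} [NormedAddCommGroup E] [NormedSpace ℝ E]
    (r : ℕ) (D : ℕ → ℝ → E) : Prop :=
  ∀ k < r, ∀ t ∈ Icc (-1:ℝ) 1, HasDerivWithinAt (D k) (D (k + 1) t) (Icc (-1:ℝ) 1) t

/-- The supremum `sup_{t ∈ [−1,1]} ‖D 1 (t)‖` of the norm of the first derivative. -/
noncomputable def supD1 {E : Type*} [NormedAddCommGroup E] [NormedSpace ℝ E]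
    (D : ℕ → ℝ → E) : ℝ :=
  ⨆ t : Icc (-1:ℝ) 1, ‖D 1 t.1‖

/-- The curve `D 0` is *bounded*: `sup_{2 ≤ s ≤ r} sup_{t ∈ [−1,1]} ‖D s (t)‖ ≤ (1/6)·sup ‖D 1‖`. -/
def BoundedFamily {E : Type*} [NormedAddCommGroup E] [NormedSpace ℝ E]
    (r : ℕ) (D : ℕ → ℝ → E) : Prop :=
  ∀ s, 2 ≤ s → s ≤ r → ∀ t ∈ Icc (-1:ℝ) 1, ‖D s t‖ ≤ (1 / 6) * supD1 D

/-- The curve `D 0` is *strongly ε-bounded*: it is bounded and `sup ‖D 1‖ ≤ ε`. -/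
def StronglyBoundedFamily {E : Type*} [NormedAddCommGroup E] [NormedSpace ℝ E]
    (r : ℕ) (ε : ℝ) (D : ℕ → ℝ → E) : Prop :=
  BoundedFamily r D ∧ ∀ t ∈ Icc (-1:ℝ) 1, ‖D 1 t‖ ≤ ε

/-- The family of successive derivatives of the reparametrized curve `t ↦ D 0 (c·t + d)`:
its `k`-th derivative is `c^k • D k (c·t + d)`. -/
noncomputable def affineReparam {E : Type*} [NormedAddCommGroup E] [NormedSpace ℝ E]
    (c d : ℝ) (D : ℕ → ℝ → E) : ℕ → ℝ → E :=
  fun k t => c ^ k • D k (c * t + d)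

/-!
Let `M = sup ‖σ'‖ > ε`. Boundedness makes `σ'` an `M/6`-Lipschitz map, so `‖σ'‖ ≥ 2M/3`
everywhere and `σ'` moves by at most `M/12` on windows of radius `1/2`. On the window
`[t - m, t + m]`, `m = ε/(2M)`, the coordinate `⟪σ'(t), σ⟫` is therefore strictly increasing with
slope at least `‖σ'(t)‖ · 7M/12`, and it covers the `ε/4`-ball of the tangent line at `σ(t)`; the
component of `σ` normal to `σ'(t)`, read over that line, is the graph, `1/7`-Lipschitz because along
the window the normal part of `σ'` is at most `M/12` while its tangential part is at least `7M/12`.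
The angle bound combines `∠(σ'(s), σ'(t)) ≤ π‖σ'(s) - σ'(t)‖/‖σ'(t)‖ ≤ (π/4)|s - t|` with
`‖σ(s) - σ(t)‖ ≥ (M/3)|s - t|`. On the two end pieces the affine reparametrization of slope `m/2`
scales the `k`-th derivative by `(m/2)^k`: the first derivative drops to at most `ε/4`, and the
higher ones drop faster than the supremum of the first.
-/

open Real
open scoped InnerProductSpace

namespace InnerProductGeometry

variable {V : Type*} [NormedAddCommGroup V] [InnerProductSpace ℝ V]

theorem angle_le_pi_div_two_mul_norm_sub {x y : V} (hx : ‖x‖ = 1) (hy : ‖y‖ = 1) :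
    angle x y ≤ π / 2 * ‖x - y‖ := by
  set θ := angle x y
  have hθ : |θ| ≤ π := by rw [abs_of_nonneg (angle_nonneg x y)]; exact angle_le_pi x y
  have hchord : ‖x - y‖ ^ 2 = 2 - 2 * cos θ := by
    rw [norm_sub_sq_real, cos_angle, hx, hy]; ring
  have hcos := cos_le_one_sub_mul_cos_sq hθ
  have hsq : θ ^ 2 ≤ (π / 2 * ‖x - y‖) ^ 2 := by
    rw [mul_pow, hchord]
    have := pi_pos
    field_simp at hcos ⊢
    nlinarith
  exact abs_le_of_sq_le_sq' hsq (by positivity) |>.2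

theorem norm_inv_norm_smul_sub_le {x y : V} (hx : x ≠ 0) (hy : y ≠ 0) :
    ‖‖x‖⁻¹ • x - ‖y‖⁻¹ • y‖ ≤ 2 * ‖x - y‖ / ‖y‖ := by
  have hnx : 0 < ‖x‖ := norm_pos_iff.2 hx
  have hny : 0 < ‖y‖ := norm_pos_iff.2 hy
  have hsplit : ‖x‖⁻¹ • x - ‖y‖⁻¹ • y = ‖y‖⁻¹ • (x - y) + (‖x‖⁻¹ - ‖y‖⁻¹) • x := by
    rw [smul_sub, sub_smul]; abel
  have hrescale : ‖(‖x‖⁻¹ - ‖y‖⁻¹) • x‖ = |‖y‖ - ‖x‖| / ‖y‖ := by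
    rw [norm_smul, norm_eq_abs, inv_sub_inv hnx.ne' hny.ne', abs_div, abs_mul,
      abs_of_pos hnx, abs_of_pos hny]
    field_simp
  calc ‖‖x‖⁻¹ • x - ‖y‖⁻¹ • y‖
      ≤ ‖‖y‖⁻¹ • (x - y)‖ + ‖(‖x‖⁻¹ - ‖y‖⁻¹) • x‖ := hsplit ▸ norm_add_le _ _
    _ = ‖x - y‖ / ‖y‖ + |‖y‖ - ‖x‖| / ‖y‖ := by
      rw [hrescale, norm_smul, norm_inv, norm_norm, inv_mul_eq_div]
    _ ≤ ‖x - y‖ / ‖y‖ + ‖x - y‖ / ‖y‖ := by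
      gcongr; rw [abs_sub_comm]; exact abs_norm_sub_norm_le x y
    _ = 2 * ‖x - y‖ / ‖y‖ := by ring

theorem angle_le_pi_mul_norm_sub_div_norm {x y : V} (hx : x ≠ 0) (hy : y ≠ 0) :
    angle x y ≤ π * ‖x - y‖ / ‖y‖ := by
  calc angle x y = angle (‖x‖⁻¹ • x) (‖y‖⁻¹ • y) := by
        rw [angle_smul_left_of_pos _ _ (by positivity), angle_smul_right_of_pos _ _ (by positivity)]
    _ ≤ π / 2 * ‖‖x‖⁻¹ • x - ‖y‖⁻¹ • y‖ :=
      angle_le_pi_div_two_mul_norm_sub (norm_smul_inv_norm hx) (norm_smul_inv_norm hy)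
    _ ≤ π / 2 * (2 * ‖x - y‖ / ‖y‖) := by gcongr; exact norm_inv_norm_smul_sub_le hx hy
    _ = π * ‖x - y‖ / ‖y‖ := by ring

end InnerProductGeometry

namespace Convex

variable {E : Type*} [NormedAddCommGroup E] {f f' : ℝ → E} {s : Set ℝ} {u : E} {κ x y : ℝ}

section NormedSpace

variable [NormedSpace ℝ E]

theorem norm_image_sub_sub_smul_le (hs : Convex ℝ s)
    (hf : ∀ z ∈ s, HasDerivWithinAt f (f' z) s z) (hκ : ∀ z ∈ s, ‖f' z - u‖ ≤ κ)
    (hx : x ∈ s) (hy : y ∈ s) : ‖f y - f x - (y - x) • u‖ ≤ κ * |y - x| := by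
  have hg : ∀ z ∈ s, HasDerivWithinAt (fun z => f z - z • u) (f' z - u) s z := fun z hz => by
    have := (hf z hz).sub ((hasDerivWithinAt_id z s).smul_const u)
    rwa [one_smul] at this
  have := hs.norm_image_sub_le_of_norm_hasDerivWithin_le hg hκ hx hy
  rw [norm_eq_abs] at this
  convert this using 2
  rw [sub_smul]; abel

theorem mul_abs_sub_le_norm_image_sub (hs : Convex ℝ s)
    (hf : ∀ z ∈ s, HasDerivWithinAt f (f' z) s z) (hκ : ∀ z ∈ s, ‖f' z - u‖ ≤ κ)
    (hx : x ∈ s) (hy : y ∈ s) : (‖u‖ - κ) * |y - x| ≤ ‖f y - f x‖ := by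
  have herr := hs.norm_image_sub_sub_smul_le hf hκ hx hy
  have := norm_sub_norm_le ((y - x) • u) ((y - x) • u - (f y - f x))
  rw [sub_sub_cancel, norm_sub_rev, norm_smul, norm_eq_abs] at this
  nlinarith

end NormedSpace

section InnerProductSpace

variable [InnerProductSpace ℝ E]

theorem mul_sub_le_inner_image_sub (hs : Convex ℝ s)
    (hf : ∀ z ∈ s, HasDerivWithinAt f (f' z) s z) (hκ : ∀ z ∈ s, ‖f' z - u‖ ≤ κ)
    (hx : x ∈ s) (hy : y ∈ s) (hxy : x ≤ y) :
    ‖u‖ * (‖u‖ - κ) * (y - x) ≤ ⟪u, f y - f x⟫_ℝ := by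
  have herr := hs.norm_image_sub_sub_smul_le hf hκ hx hy
  have hcs := neg_le_of_abs_le (abs_real_inner_le_norm u (f y - f x - (y - x) • u))
  rw [abs_of_nonneg (sub_nonneg.2 hxy)] at herr
  rw [inner_sub_right, real_inner_smul_right, real_inner_self_eq_norm_sq] at hcs
  nlinarith [norm_nonneg u]

theorem strictMonoOn_inner_image (hs : Convex ℝ s)
    (hf : ∀ z ∈ s, HasDerivWithinAt f (f' z) s z) (hκ : ∀ z ∈ s, ‖f' z - u‖ ≤ κ)
    (hκu : κ < ‖u‖) : StrictMonoOn (fun z => ⟪u, f z⟫_ℝ) s := by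
  intro x hx y hy hxy
  have hκ0 : 0 ≤ κ := (norm_nonneg _).trans (hκ x hx)
  have := hs.mul_sub_le_inner_image_sub hf hκ hx hy hxy.le
  rw [inner_sub_right] at this
  have : 0 < ‖u‖ * (‖u‖ - κ) * (y - x) := by
    apply mul_pos (mul_pos _ _) <;> linarith
  linarith

theorem mul_abs_sub_le_abs_inner_image_sub (hs : Convex ℝ s)
    (hf : ∀ z ∈ s, HasDerivWithinAt f (f' z) s z) (hκ : ∀ z ∈ s, ‖f' z - u‖ ≤ κ)
    (hx : x ∈ s) (hy : y ∈ s) :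
    ‖u‖ * (‖u‖ - κ) * |y - x| ≤ |⟪u, f y - f x⟫_ℝ| := by
  rcases le_total x y with hxy | hyx
  · rw [abs_of_nonneg (sub_nonneg.2 hxy)]
    exact (hs.mul_sub_le_inner_image_sub hf hκ hx hy hxy).trans (le_abs_self _)
  · rw [abs_sub_comm, abs_of_nonneg (sub_nonneg.2 hyx), ← abs_neg, ← inner_neg_right, neg_sub]
    exact (hs.mul_sub_le_inner_image_sub hf hκ hy hx hyx).trans (le_abs_self _)

theorem norm_starProjection_image_sub_le (hs : Convex ℝ s)
    (hf : ∀ z ∈ s, HasDerivWithinAt f (f' z) s z) (hκ : ∀ z ∈ s, ‖f' z - u‖ ≤ κ)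
    (hx : x ∈ s) (hy : y ∈ s) : ‖(ℝ ∙ u)ᗮ.starProjection (f y - f x)‖ ≤ κ * |y - x| := by
  have hu : (ℝ ∙ u)ᗮ.starProjection (f y - f x) =
      (ℝ ∙ u)ᗮ.starProjection (f y - f x - (y - x) • u) := by
    rw [map_sub _ _ ((y - x) • u), map_smul,
      Submodule.starProjection_orthogonalComplement_singleton_eq_zero, smul_zero, sub_zero]
  rw [hu]
  exact (Submodule.norm_starProjection_apply_le _ _).trans
    (hs.norm_image_sub_sub_smul_le hf hκ hx hy)

end InnerProductSpace

end Convex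

section GraphOverLine

variable {E : Type*} [NormedAddCommGroup E] [InnerProductSpace ℝ E] {f f' : ℝ → E} {u : E}
  {t ρ κ : ℝ}

theorem exists_inner_eq_of_norm_le
    (hf : ∀ z ∈ Icc (t - ρ) (t + ρ), HasDerivWithinAt f (f' z) (Icc (t - ρ) (t + ρ)) z)
    (hκ : ∀ z ∈ Icc (t - ρ) (t + ρ), ‖f' z - u‖ ≤ κ) (hρ : 0 ≤ ρ) {v : E}
    (hv : ‖v‖ ≤ (‖u‖ - κ) * ρ) : ∃ z ∈ Icc (t - ρ) (t + ρ), ⟪u, f z⟫_ℝ = ⟪u, f t + v⟫_ℝ := by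
  have hs : Convex ℝ (Icc (t - ρ) (t + ρ)) := convex_Icc _ _
  have ht : t ∈ Icc (t - ρ) (t + ρ) := ⟨by linarith, by linarith⟩
  have hψ : ContinuousOn (fun z => ⟪u, f z⟫_ℝ) (Icc (t - ρ) (t + ρ)) :=
    continuousOn_const.inner (𝕜 := ℝ) fun z hz => (hf z hz).continuousWithinAt
  have hlo := hs.mul_sub_le_inner_image_sub hf hκ ⟨le_rfl, by linarith⟩ ht (by linarith)
  have hhi := hs.mul_sub_le_inner_image_sub hf hκ ht ⟨by linarith, le_rfl⟩ (by linarith)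
  have hcs := abs_le.1 (abs_real_inner_le_norm u v)
  have huv : ‖u‖ * ‖v‖ ≤ ‖u‖ * (‖u‖ - κ) * ρ := by rw [mul_assoc]; gcongr
  rw [inner_sub_right] at hlo hhi
  refine intermediate_value_Icc (by linarith) hψ ⟨?_, ?_⟩ <;>
    simp only [inner_add_right] <;> linarith

theorem exists_lipschitz_graph_over_line {L β : ℝ}
    (hf : ∀ z ∈ Icc (t - ρ) (t + ρ), HasDerivWithinAt f (f' z) (Icc (t - ρ) (t + ρ)) z)
    (hκ : ∀ z ∈ Icc (t - ρ) (t + ρ), ‖f' z - u‖ ≤ κ) (hκu : κ < ‖u‖)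
    (hL : κ ≤ L * (‖u‖ - κ)) (hρ : 0 ≤ ρ) (hβ : β ≤ (‖u‖ - κ) * ρ) :
    ∃ φ : E → E, φ 0 = 0 ∧ (∀ v, φ v ∈ (ℝ ∙ u)ᗮ) ∧
      (∀ v ∈ ℝ ∙ u, ‖v‖ ≤ β → f t + v + φ v ∈ f '' Icc (t - ρ) (t + ρ)) ∧
      ∀ v w, ‖v‖ ≤ β → ‖w‖ ≤ β → ‖φ v - φ w‖ ≤ L * ‖v - w‖ := by
  set s := Icc (t - ρ) (t + ρ)
  have hs : Convex ℝ s := convex_Icc _ _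
  have ht : t ∈ s := ⟨by linarith, by linarith⟩
  have hu : 0 < ‖u‖ := ((norm_nonneg _).trans (hκ t ht)).trans_lt hκu
  -- `foot v` is the parameter at which the curve lies over the point `f t + v` of the line
  set foot : E → ℝ := fun v => Function.invFunOn (fun z => ⟪u, f z⟫_ℝ) s ⟪u, f t + v⟫_ℝ
  have hfoot : ∀ v : E, ‖v‖ ≤ β → foot v ∈ s ∧ ⟪u, f (foot v)⟫_ℝ = ⟪u, f t + v⟫_ℝ :=
    fun v hv => Function.invFunOn_pos (exists_inner_eq_of_norm_le hf hκ hρ (hv.trans hβ))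
  set K := ℝ ∙ u
  refine ⟨fun v => Kᗮ.starProjection (f (foot v) - f t), ?_,
    fun v => Kᗮ.starProjection_apply_mem _, ?_, ?_⟩
  · have hfoot0 : foot 0 = t := by
      simpa [foot] using (hs.strictMonoOn_inner_image hf hκ hκu).injOn.leftInvOn_invFunOn ht
    simp [hfoot0]
  · intro v hvK hv
    obtain ⟨hmem, hval⟩ := hfoot v hv
    have hproj : K.starProjection (f (foot v) - f t) = v := calc
      _ = K.starProjection v := by
        rw [Submodule.starProjection_singleton, Submodule.starProjection_singleton,
          inner_sub_right, hval, inner_add_right, add_sub_cancel_left]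
      _ = v := K.starProjection_eq_self_iff.2 hvK
    refine ⟨foot v, hmem, ?_⟩
    calc f (foot v) = f t + (K.starProjection (f (foot v) - f t)
          + Kᗮ.starProjection (f (foot v) - f t)) := by
          rw [K.starProjection_add_starProjection_orthogonal, add_sub_cancel]
      _ = _ := by rw [hproj, add_assoc]
  · intro v w hv hw
    obtain ⟨hav, hva⟩ := hfoot v hv
    obtain ⟨haw, hwa⟩ := hfoot w hw
    have hsep : ‖u‖ * ((‖u‖ - κ) * |foot v - foot w|) ≤ ‖u‖ * ‖v - w‖ := calc
      _ = ‖u‖ * (‖u‖ - κ) * |foot v - foot w| := by ring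
      _ ≤ |⟪u, f (foot v) - f (foot w)⟫_ℝ| := hs.mul_abs_sub_le_abs_inner_image_sub hf hκ haw hav
      _ = |⟪u, v - w⟫_ℝ| := by
        rw [inner_sub_right, hva, hwa, inner_add_right, inner_add_right, add_sub_add_left_eq_sub,
          ← inner_sub_right]
      _ ≤ ‖u‖ * ‖v - w‖ := abs_real_inner_le_norm u (v - w)
    have hL0 : 0 ≤ L := by nlinarith [(norm_nonneg _).trans (hκ t ht)]
    calc ‖Kᗮ.starProjection (f (foot v) - f t) - Kᗮ.starProjection (f (foot w) - f t)‖
        = ‖Kᗮ.starProjection (f (foot v) - f (foot w))‖ := by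
          rw [← map_sub, sub_sub_sub_cancel_right]
      _ ≤ κ * |foot v - foot w| := hs.norm_starProjection_image_sub_le hf hκ haw hav
      _ ≤ L * ((‖u‖ - κ) * |foot v - foot w|) := by rw [← mul_assoc]; gcongr
      _ ≤ L * ‖v - w‖ := by gcongr; exact le_of_mul_le_mul_left hsep hu

end GraphOverLine

section Family

variable {E : Type*} [NormedAddCommGroup E] {r : ℕ} {D : ℕ → ℝ → E}

section NormedSpace

variable [NormedSpace ℝ E]

theorem DerivFamilyOn.norm_le_supD1 (hD : DerivFamilyOn r D) (hr : 1 < r) {t : ℝ}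
    (ht : t ∈ Icc (-1 : ℝ) 1) : ‖D 1 t‖ ≤ supD1 D := by
  have hc : ContinuousOn (fun x => ‖D 1 x‖) (Icc (-1 : ℝ) 1) :=
    ContinuousOn.norm fun x hx => (hD 1 hr x hx).continuousWithinAt
  have hbdd := (isCompact_Icc.image_of_continuousOn hc).bddAbove
  rw [image_eq_range] at hbdd
  exact le_ciSup hbdd ⟨t, ht⟩

theorem BoundedFamily.norm_sub_le (hB : BoundedFamily r D) (hD : DerivFamilyOn r D) (hr : 2 ≤ r)
    {x y : ℝ} (hx : x ∈ Icc (-1 : ℝ) 1) (hy : y ∈ Icc (-1 : ℝ) 1) :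
    ‖D 1 y - D 1 x‖ ≤ supD1 D / 6 * |y - x| := by
  have hD2 : ∀ z ∈ Icc (-1 : ℝ) 1, ‖D 2 z‖ ≤ supD1 D / 6 := fun z hz => by
    linarith [hB 2 le_rfl hr z hz]
  simpa [norm_eq_abs] using (convex_Icc (-1 : ℝ) 1).norm_image_sub_le_of_norm_hasDerivWithin_le
    (fun z hz => hD 1 (by omega) z hz) hD2 hx hy

theorem BoundedFamily.norm_sub_le_supD1_div_three (hB : BoundedFamily r D)
    (hD : DerivFamilyOn r D) (hr : 2 ≤ r) {x y : ℝ} (hx : x ∈ Icc (-1 : ℝ) 1)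
    (hy : y ∈ Icc (-1 : ℝ) 1) : ‖D 1 y - D 1 x‖ ≤ supD1 D / 3 := by
  have hM : 0 ≤ supD1 D := (norm_nonneg _).trans (hD.norm_le_supD1 (by omega) hx)
  have hyx : |y - x| ≤ 2 := abs_le.2 ⟨by linarith [hx.2, hy.1], by linarith [hx.1, hy.2]⟩
  calc ‖D 1 y - D 1 x‖ ≤ supD1 D / 6 * |y - x| := hB.norm_sub_le hD hr hx hy
    _ ≤ supD1 D / 6 * 2 := by gcongr
    _ = supD1 D / 3 := by ring

theorem BoundedFamily.two_mul_supD1_div_three_le_norm (hB : BoundedFamily r D)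
    (hD : DerivFamilyOn r D) (hr : 2 ≤ r) {t : ℝ} (ht : t ∈ Icc (-1 : ℝ) 1) :
    2 * supD1 D / 3 ≤ ‖D 1 t‖ := by
  have : Nonempty (Icc (-1 : ℝ) 1) := ⟨⟨t, ht⟩⟩
  have hsup : supD1 D ≤ ‖D 1 t‖ + supD1 D / 3 := ciSup_le fun ⟨x, hx⟩ => by
    linarith [norm_le_norm_add_norm_sub' (D 1 x) (D 1 t),
      hB.norm_sub_le_supD1_div_three hD hr ht hx]
  linarith

theorem mapsTo_affine_Icc {c d : ℝ} (hc : 0 ≤ c) (hlo : -1 ≤ d - c) (hhi : d + c ≤ 1) :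
    MapsTo (fun t => c * t + d) (Icc (-1 : ℝ) 1) (Icc (-1 : ℝ) 1) := fun t ht => by
  constructor <;> nlinarith [ht.1, ht.2]

theorem derivFamilyOn_affineReparam (hD : DerivFamilyOn r D) {c d : ℝ}
    (hcd : MapsTo (fun t => c * t + d) (Icc (-1 : ℝ) 1) (Icc (-1 : ℝ) 1)) :
    DerivFamilyOn r (affineReparam c d D) := by
  intro k hk t ht
  have hlin : HasDerivWithinAt (fun t => c * t + d) c (Icc (-1 : ℝ) 1) t := by
    simpa using ((hasDerivWithinAt_id t _).const_mul c).add_const d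
  have := ((hD k hk _ (hcd ht)).scomp t hlin hcd).const_smul (c ^ k)
  rwa [smul_smul, ← pow_succ] at this

theorem BoundedFamily.stronglyBoundedFamily_affineReparam (hB : BoundedFamily r D)
    (hD : DerivFamilyOn r D) (hr : 2 ≤ r) {ε c d : ℝ} (hc0 : 0 < c) (hc : c ≤ 1 / 4)
    (hcε : c * supD1 D ≤ ε)
    (hcd : MapsTo (fun t => c * t + d) (Icc (-1 : ℝ) 1) (Icc (-1 : ℝ) 1)) :
    StronglyBoundedFamily r ε (affineReparam c d D) := by
  have hnorm : ∀ k t, ‖affineReparam c d D k t‖ = c ^ k * ‖D k (c * t + d)‖ := fun k t => by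
    rw [affineReparam, norm_smul, norm_pow, norm_eq_abs, abs_of_pos hc0]
  have hend : (-1 : ℝ) ∈ Icc (-1 : ℝ) 1 := ⟨le_rfl, by norm_num⟩
  have hsup : c * (2 * supD1 D / 3) ≤ supD1 (affineReparam c d D) := by
    have := (derivFamilyOn_affineReparam hD hcd).norm_le_supD1 (by omega) hend
    rw [hnorm, pow_one] at this
    exact (mul_le_mul_of_nonneg_left (hB.two_mul_supD1_div_three_le_norm hD hr (hcd hend))
      hc0.le).trans this
  refine ⟨fun k hk2 hkr t ht => ?_, fun t ht => ?_⟩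
  · have hpow : c ^ k ≤ c / 4 := calc
      c ^ k ≤ c ^ 2 := pow_le_pow_of_le_one hc0.le (by linarith) hk2
      _ ≤ c / 4 := by nlinarith
    have := hB k hk2 hkr _ (hcd ht)
    rw [hnorm]
    calc c ^ k * ‖D k (c * t + d)‖ ≤ c / 4 * (1 / 6 * supD1 D) := by gcongr
      _ ≤ 1 / 6 * (c * (2 * supD1 D / 3)) := by nlinarith [(norm_nonneg _).trans this]
      _ ≤ 1 / 6 * supD1 (affineReparam c d D) := by gcongr
  · rw [hnorm, pow_one]
    exact (mul_le_mul_of_nonneg_left (hD.norm_le_supD1 (by omega) (hcd ht)) hc0.le).trans hcε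

end NormedSpace

section InnerProductSpace

variable [InnerProductSpace ℝ E]

theorem BoundedFamily.supD1_mul_angle_le (hB : BoundedFamily r D) (hD : DerivFamilyOn r D)
    (hr : 2 ≤ r) (hM : 0 < supD1 D) {s t : ℝ} (hs : s ∈ Icc (-1 : ℝ) 1)
    (ht : t ∈ Icc (-1 : ℝ) 1) :
    supD1 D * InnerProductGeometry.angle (D 1 s) (D 1 t) ≤ 3 * ‖D 0 s - D 0 t‖ := by
  have hnz : ∀ {x}, x ∈ Icc (-1 : ℝ) 1 → D 1 x ≠ 0 := fun hx h => by
    linarith [hB.two_mul_supD1_div_three_le_norm hD hr hx, norm_eq_zero.2 h]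
  have hut := hB.two_mul_supD1_div_three_le_norm hD hr ht
  have hangle : InnerProductGeometry.angle (D 1 s) (D 1 t) ≤ π / 4 * |s - t| := calc
    _ ≤ π * ‖D 1 s - D 1 t‖ / ‖D 1 t‖ :=
      InnerProductGeometry.angle_le_pi_mul_norm_sub_div_norm (hnz hs) (hnz ht)
    _ ≤ π * (supD1 D / 6 * |s - t|) / (2 * supD1 D / 3) := by
      gcongr; exact hB.norm_sub_le hD hr ht hs
    _ = π / 4 * |s - t| := by field_simp; ring
  have hsep : supD1 D / 3 * |s - t| ≤ ‖D 0 s - D 0 t‖ := by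
    have := (convex_Icc (-1 : ℝ) 1).mul_abs_sub_le_norm_image_sub (fun z hz => hD 0 (by omega) z hz)
      (fun z hz => hB.norm_sub_le_supD1_div_three hD hr ht hz) ht hs
    nlinarith [abs_nonneg (s - t)]
  calc supD1 D * InnerProductGeometry.angle (D 1 s) (D 1 t)
      ≤ supD1 D * (π / 4 * |s - t|) := by gcongr
    _ = π / 4 * 3 * (supD1 D / 3 * |s - t|) := by ring
    _ ≤ 1 * 3 * ‖D 0 s - D 0 t‖ := by gcongr; linarith [pi_le_four]
    _ = 3 * ‖D 0 s - D 0 t‖ := by ring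

theorem BoundedFamily.exists_lipschitz_graph (hB : BoundedFamily r D) (hD : DerivFamilyOn r D)
    (hr : 2 ≤ r) (hM : 0 < supD1 D) {t ρ β : ℝ} (hρ0 : 0 ≤ ρ) (hρ : ρ ≤ 1 / 2)
    (ht : Icc (t - ρ) (t + ρ) ⊆ Icc (-1 : ℝ) 1) (hβ : β ≤ 7 * supD1 D / 12 * ρ) :
    ∃ φ : E → E, φ 0 = 0 ∧ (∀ v, φ v ∈ (ℝ ∙ D 1 t)ᗮ) ∧
      (∀ v ∈ ℝ ∙ D 1 t, ‖v‖ ≤ β → D 0 t + v + φ v ∈ D 0 '' Icc (-1 : ℝ) 1) ∧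
      ∀ v w, ‖v‖ ≤ β → ‖w‖ ≤ β → ‖φ v - φ w‖ ≤ 1 / 3 * ‖v - w‖ := by
  have ht' : t ∈ Icc (-1 : ℝ) 1 := ht ⟨by linarith, by linarith⟩
  have hut := hB.two_mul_supD1_div_three_le_norm hD hr ht'
  have hκ : ∀ z ∈ Icc (t - ρ) (t + ρ), ‖D 1 z - D 1 t‖ ≤ supD1 D / 12 := fun z hz => calc
    _ ≤ supD1 D / 6 * |z - t| := hB.norm_sub_le hD hr ht' (ht hz)
    _ ≤ supD1 D / 6 * (1 / 2) := by
      gcongr; exact abs_sub_le_iff.2 ⟨by linarith [hz.2], by linarith [hz.1]⟩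
    _ = supD1 D / 12 := by ring
  obtain ⟨φ, h0, horth, hgraph, hlip⟩ := exists_lipschitz_graph_over_line (L := 1 / 3)
    (fun z hz => (hD 0 (by omega) z (ht hz)).mono ht) hκ (by linarith) (by linarith) hρ0
    (hβ.trans (by gcongr; linarith))
  exact ⟨φ, h0, horth, fun v hv hvβ => image_mono ht (hgraph v hv hvβ), hlip⟩

end InnerProductSpace

end Family

/-- (The paper's Lemma 2-Res in a linear ambient space.) For every `ε > 0`
and `r ≥ 2` there is `β > 0` such that for every bounded, not strongly ε-bounded C^r curve
`σ : [−1,1] → E` into a real inner product space there are `−1 < t₁ < 0 < t₂ < 1` with: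
(i) each `t ∈ [t₁,t₂]` carries a `1/3`-Lipschitz graph of size `β` over `ℝ·σ′(t)` (with values
in its orthogonal complement) contained in `σ([−1,1])`, along which the tangent direction
satisfies the angle estimate `∠(σ′(s), σ′(t)) ≤ ‖σ(s) − σ(t)‖/β`; and
(ii) the affine reparametrizations of `σ` onto `[−1,t₁]` and `[t₂,1]` are strongly ε-bounded. -/
theorem stmt_7 (ε : ℝ) (hε : 0 < ε) (r : ℕ) (hr : 2 ≤ r) :
    ∃ β : ℝ, 0 < β ∧
      ∀ (E : Type u) [NormedAddCommGroup E] [InnerProductSpace ℝ E],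
        ∀ (σ : ℝ → E) (D : ℕ → ℝ → E), D 0 = σ → DerivFamilyOn r D → BoundedFamily r D →
          ε < supD1 D →
          ∃ t₁ t₂ : ℝ, -1 < t₁ ∧ t₁ < 0 ∧ 0 < t₂ ∧ t₂ < 1 ∧
            (∀ t ∈ Icc t₁ t₂, ∃ φ : E → E,
              φ 0 = 0 ∧
              (∀ v, v ∈ (ℝ ∙ D 1 t) → ‖v‖ ≤ β → φ v ∈ (ℝ ∙ D 1 t)ᗮ) ∧
              (∀ v, v ∈ (ℝ ∙ D 1 t) → ‖v‖ ≤ β → ∀ w, w ∈ (ℝ ∙ D 1 t) → ‖w‖ ≤ β →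
                ‖φ v - φ w‖ ≤ 1 / 3 * ‖v - w‖) ∧
              (∀ v, v ∈ (ℝ ∙ D 1 t) → ‖v‖ ≤ β →
                σ t + v + φ v ∈ σ '' Icc (-1:ℝ) 1) ∧
              (∀ s ∈ Icc (-1:ℝ) 1,
                (∃ v, v ∈ (ℝ ∙ D 1 t) ∧ ‖v‖ ≤ β ∧ σ s = σ t + v + φ v) →
                InnerProductGeometry.angle (D 1 s) (D 1 t) ≤ ‖σ s - σ t‖ / β)) ∧
            (DerivFamilyOn r (affineReparam ((t₁ + 1) / 2) ((t₁ - 1) / 2) D) ∧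
              StronglyBoundedFamily r ε (affineReparam ((t₁ + 1) / 2) ((t₁ - 1) / 2) D)) ∧
            (DerivFamilyOn r (affineReparam ((1 - t₂) / 2) ((1 + t₂) / 2) D) ∧
              StronglyBoundedFamily r ε (affineReparam ((1 - t₂) / 2) ((1 + t₂) / 2) D)) := by
  refine ⟨ε / 4, by positivity, fun E _ _ σ D hσ hD hB hεM => ?_⟩
  subst hσ
  have hM : 0 < supD1 D := hε.trans hεM
  set m := ε / (2 * supD1 D)
  have hm0 : 0 < m := by positivity
  have hmM : m * supD1 D = ε / 2 := by simp only [m]; field_simp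
  have hm : m ≤ 1 / 2 := by rw [div_le_iff₀ (by positivity)]; linarith
  refine ⟨-1 + m, 1 - m, by linarith, by linarith, by linarith, by linarith, fun t ht => ?_, ?_, ?_⟩
  · obtain ⟨φ, h0, horth, hgraph, hlip⟩ := hB.exists_lipschitz_graph hD hr hM hm0.le hm
      (fun z hz => ⟨by linarith [ht.1, hz.1], by linarith [ht.2, hz.2]⟩) (β := ε / 4)
      (by nlinarith)
    refine ⟨φ, h0, fun v _ _ => horth v, fun v _ hv w _ hw => hlip v w hv hw, hgraph,
      fun s hs _ => ?_⟩
    have ht' : t ∈ Icc (-1 : ℝ) 1 := ⟨by linarith [ht.1], by linarith [ht.2]⟩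
    have := hB.supD1_mul_angle_le hD hr hM hs ht'
    rw [le_div_iff₀ (by positivity)]
    nlinarith [InnerProductGeometry.angle_nonneg (D 1 s) (D 1 t)]
  · have hcd := mapsTo_affine_Icc (c := (-1 + m + 1) / 2) (d := (-1 + m - 1) / 2)
      (by linarith) (by linarith) (by linarith)
    exact ⟨derivFamilyOn_affineReparam hD hcd,
      hB.stronglyBoundedFamily_affineReparam hD hr (by linarith) (by linarith) (by nlinarith) hcd⟩
  · have hcd := mapsTo_affine_Icc (c := (1 - (1 - m)) / 2) (d := (1 + (1 - m)) / 2)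
      (by linarith) (by linarith) (by linarith)
    exact ⟨derivFamilyOn_affineReparam hD hcd,
      hB.stronglyBoundedFamily_affineReparam hD hr (by linarith) (by linarith) (by nlinarith) hcd⟩
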